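/- arXiv:0911.0068 — 4 statements merged into one kernel-verified Lean document; each statement's English description precedes it below -/
import Mathlib

section
/- The statements (1) every progressive self-map on an inhabited chain-complete poset has a fixed point, and (2) every progressive self-map on an inhabited directed-complete poset has a fixed point, are equivalent (and the proof of the equivalence does not require choice beyond what is used in the stated constructions). -/
theorem stmt_2 :
    (∀ (P : Type) [PartialOrder P] [Nonempty P],
      (∀ C : Set P, C.Nonempty → IsChain (· ≤ ·) C → ∃ s, IsLUB C s) →
      ∀ f : P → P, (∀ x, x ≤ f x) → ∃ x, f x = x) ↔
    (∀ (P : Type) [PartialOrder P] [Nonempty P],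
      (∀ D : Set P, D.Nonempty → DirectedOn (· ≤ ·) D → ∃ s, IsLUB D s) →
      ∀ f : P → P, (∀ x, x ≤ f x) → ∃ x, f x = x) := by
  constructor
  · -- (1) → (2): directed-complete implies chain-complete
    intro h P _ _ hd f hf
    exact h P (fun C hC hch => hd C hC hch.directedOn) f hf
  · -- (2) → (1)
    intro h P _ _ hcc f hf
    classical
    -- the poset of inhabited chains of P
    let Q := {A : Set P // A.Nonempty ∧ IsChain (· ≤ ·) A}
    haveI : Nonempty Q :=
      ⟨⟨{Classical.arbitrary P}, Set.singleton_nonempty _,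
        Set.subsingleton_singleton.isChain⟩⟩
    -- sup of a chain
    have hsup : ∀ A : Q, IsLUB A.1 ((hcc A.1 A.2.1 A.2.2).choose) :=
      fun A => (hcc A.1 A.2.1 A.2.2).choose_spec
    set sup : Q → P := fun A => (hcc A.1 A.2.1 A.2.2).choose with hsupdef
    -- Q is directed-complete
    have hQd : ∀ D : Set Q, D.Nonempty → DirectedOn (· ≤ ·) D → ∃ s, IsLUB D s := by
      intro D hDne hDdir
      have hUne : (⋃ A ∈ D, (A : Q).1).Nonempty := by
        obtain ⟨A, hA⟩ := hDne
        obtain ⟨x, hx⟩ := A.2.1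
        exact ⟨x, Set.mem_biUnion hA hx⟩
      have hUch : IsChain (· ≤ ·) (⋃ A ∈ D, (A : Q).1) := by
        intro x hx y hy hxy
        simp only [Set.mem_iUnion] at hx hy
        obtain ⟨A, hA, hxA⟩ := hx
        obtain ⟨B, hB, hyB⟩ := hy
        obtain ⟨C, _, hAC, hBC⟩ := hDdir A hA B hB
        exact C.2.2 (hAC hxA) (hBC hyB) hxy
      refine ⟨⟨⋃ A ∈ D, (A : Q).1, hUne, hUch⟩, ⟨?_, ?_⟩⟩
      · intro A hA
        exact Set.subset_biUnion_of_mem hA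
      · intro B hB
        intro x hx
        simp only [Set.mem_iUnion] at hx
        obtain ⟨A, hA, hxA⟩ := hx
        exact hB hA hxA
    -- progressive map on Q
    have hFch : ∀ A : Q, IsChain (· ≤ ·) (A.1 ∪ {f (sup A)}) := by
      intro A x hx y hy hxy
      have key : ∀ z ∈ A.1, z ≤ f (sup A) :=
        fun z hz => le_trans ((hsup A).1 hz) (hf _)
      rcases hx with hx | hx <;> rcases hy with hy | hy
      · exact A.2.2 hx hy hxy
      · exact Or.inl (hy ▸ key x hx)
      · exact Or.inr (hx ▸ key y hy)
      · exact absurd (hx.trans hy.symm) hxy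
    let F : Q → Q := fun A =>
      ⟨A.1 ∪ {f (sup A)}, A.2.1.mono Set.subset_union_left, hFch A⟩
    have hFprog : ∀ A : Q, A ≤ F A := fun A => Set.subset_union_left
    obtain ⟨B, hB⟩ := h Q hQd F hFprog
    have hmem : f (sup B) ∈ B.1 := by
      have : f (sup B) ∈ (F B).1 := Or.inr rfl
      rwa [hB] at this
    exact ⟨sup B, le_antisymm ((hsup B).1 hmem) (hf _)⟩
end

section
/- (Bourbaki–Witt) Let P be a nonempty poset in which every nonempty chain has a least upper bound, and let f : P → P satisfy x ≤ f(x) for all x. Then f has a fixed point; moreover, for every a ∈ P there is a fixed point x of f with a ≤ x. -/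
theorem stmt_6 {P : Type*} [PartialOrder P] [Nonempty P]
    (hcc : ∀ C : Set P, C.Nonempty → IsChain (· ≤ ·) C → ∃ s, IsLUB C s)
    (f : P → P) (hprog : ∀ x, x ≤ f x) :
    (∃ x, f x = x) ∧ ∀ a : P, ∃ x, f x = x ∧ a ≤ x := by
  have key : ∀ a : P, ∃ x, f x = x ∧ a ≤ x := by
    intro a
    obtain ⟨m, ham, hm⟩ := zorn_le_nonempty_Ici₀ a
      (fun c _ hc y hy => by
        obtain ⟨s, hs⟩ := hcc c ⟨y, hy⟩ hc
        exact ⟨s, fun z hz => hs.1 hz⟩) a le_rfl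
    exact ⟨m, le_antisymm (hm (hprog m)) (hprog m), ham⟩
  obtain ⟨a⟩ := ‹Nonempty P›
  exact ⟨(key a).imp fun x h => h.1, key⟩
end

section
/- (Tarski for chain-complete lattices) Let L be a lattice in which every chain (including the empty chain) has a least upper bound, and let f : L → L be monotone. Then f has a fixed point. -/
theorem stmt_7 {L : Type*} [Lattice L]
    (hcc : ∀ C : Set L, IsChain (· ≤ ·) C → ∃ s, IsLUB C s)
    (f : L → L) (hmono : Monotone f) :
    ∃ x, f x = x := by
  have h := zorn_le₀ {x : L | x ≤ f x} (by
    intro c hc hchain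
    obtain ⟨s, hs⟩ := hcc c hchain
    refine ⟨s, ?_, fun z hz => hs.1 hz⟩
    apply hs.2
    intro z hz
    exact le_trans (hc hz) (hmono (hs.1 hz)))
  obtain ⟨m, hm⟩ := h
  exact ⟨m, (hm.eq_of_ge (hmono hm.prop) hm.prop).symm ▸ rfl⟩
end

section
/- (Pataraia/Tarski for dcpos, classical formulation) Let P be an inhabited poset in which every directed subset has a least upper bound, and let f : P → P be monotone and progressive. Then f has a least fixed point above any given point a ∈ P. -/
theorem stmt_18 {P : Type*} [PartialOrder P] [Nonempty P]
    (hdir : ∀ D : Set P, D.Nonempty → DirectedOn (· ≤ ·) D → ∃ s, IsLUB D s)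
    (f : P → P) (hmono : Monotone f) (hprog : ∀ x, x ≤ f x) (a : P) :
    ∃ x, f x = x ∧ a ≤ x ∧ ∀ y, f y = y → a ≤ y → x ≤ y := by
  set S : Set P := {x | a ≤ x ∧ ∀ y, f y = y → a ≤ y → x ≤ y} with hS
  have haS : a ∈ S := ⟨le_refl a, fun y _ hy => hy⟩
  have hfS : ∀ x ∈ S, f x ∈ S := fun x ⟨hax, hx⟩ =>
    ⟨le_trans hax (hprog x), fun y hfy hay => by
      calc f x ≤ f y := hmono (hx y hfy hay)
        _ = y := hfy⟩
  obtain ⟨m, _, hmax⟩ := zorn_le_nonempty₀ S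
    (fun c hcS hc y hyc => by
      obtain ⟨s, hs⟩ := hdir c ⟨y, hyc⟩ hc.directedOn
      refine ⟨s, ⟨le_trans (hcS hyc).1 (hs.1 hyc), fun z hfz haz =>
        hs.2 (fun w hw => (hcS hw).2 z hfz haz)⟩, fun z hz => hs.1 hz⟩) a haS
  have hmS := hmax.1
  have hfm : f m = m := le_antisymm (hmax.2 (hfS m hmS) (hprog m)) (hprog m)
  exact ⟨m, hfm, hmS.1, hmS.2⟩
end
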